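/- Let 𝒞 be a class of finite simple graphs, k ≥ 1, and c ≥ 1 a real number. Suppose there exists p' > 0 such that every graph G ∈ 𝒞 with at least one vertex admits a CS-separator of size at most p'·|V(G)|^c. Then there exists p > 0 such that every trigraph T in closure(𝒞^{≤k}) with at least one vertex admits a CS-separator of size at most p·|V(T)|^{k²c}. -/

import Mathlib

/-- A trigraph on a finite vertex set `verts` drawn from an ambient type `α`:
a symmetric adjacency function with values in {-1, 0, 1}. (Graphs are the trigraphs with
no value 0 between distinct vertices of `verts`.) -/
structure FTG (α : Type) where
  verts : Finset α
  theta : α → α → ℤ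
  symm : ∀ u v, theta u v = theta v u
  range : ∀ u v, theta u v = -1 ∨ theta u v = 0 ∨ theta u v = 1

namespace FTG

variable {α : Type} [DecidableEq α]

def StrongAdj (T : FTG α) (u v : α) : Prop :=
  u ∈ T.verts ∧ v ∈ T.verts ∧ u ≠ v ∧ T.theta u v = 1

def StrongAntiAdj (T : FTG α) (u v : α) : Prop :=
  u ∈ T.verts ∧ v ∈ T.verts ∧ u ≠ v ∧ T.theta u v = -1

def Switchable (T : FTG α) (u v : α) : Prop :=
  u ∈ T.verts ∧ v ∈ T.verts ∧ u ≠ v ∧ T.theta u v = 0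

def Adj (T : FTG α) (u v : α) : Prop :=
  u ∈ T.verts ∧ v ∈ T.verts ∧ u ≠ v ∧ 0 ≤ T.theta u v

def AntiAdj (T : FTG α) (u v : α) : Prop :=
  u ∈ T.verts ∧ v ∈ T.verts ∧ u ≠ v ∧ T.theta u v ≤ 0

/-- `T` is a (simple) graph: no switchable pair. -/
def IsGraph (T : FTG α) : Prop :=
  ∀ u v, u ∈ T.verts → v ∈ T.verts → u ≠ v → T.theta u v ≠ 0

/-- `G` is a realization of `T`: a graph on the same vertex set keeping all strong edges
and strong antiedges. -/
def IsRealization (T G : FTG α) : Prop :=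
  G.verts = T.verts ∧ G.IsGraph ∧
  ∀ u v, u ∈ T.verts → v ∈ T.verts → u ≠ v →
    (T.theta u v = 1 → G.theta u v = 1) ∧ (T.theta u v = -1 → G.theta u v = -1)

def IsClique (T : FTG α) (K : Set α) : Prop := K ⊆ ↑T.verts ∧ K.Pairwise T.Adj

def IsStable (T : FTG α) (S : Set α) : Prop := S ⊆ ↑T.verts ∧ S.Pairwise T.AntiAdj

def IsCut (T : FTG α) (c : Set α × Set α) : Prop :=
  Disjoint c.1 c.2 ∧ c.1 ∪ c.2 = ↑T.verts

def IsCSSeparator (T : FTG α) (F : Finset (Set α × Set α)) : Prop :=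
  (∀ c ∈ F, T.IsCut c) ∧
  ∀ K S : Set α, T.IsClique K → T.IsStable S → Disjoint K S →
    ∃ c ∈ F, K ⊆ c.1 ∧ S ⊆ c.2

/-- Membership in the class `𝒞^{≤k}`: the vertex set has a partition into parts of size
at most `k`, all pairs inside a part are switchable, no switchable pair crosses two parts,
and some realization belongs to `𝒞`. -/
def InCk (C : Set (FTG α)) (k : ℕ) (T : FTG α) : Prop :=
  (∃ P : Finset (Finset α),
    P.biUnion id = T.verts ∧
    (∀ p ∈ P, ∀ q ∈ P, p ≠ q → Disjoint p q) ∧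
    (∀ p ∈ P, 1 ≤ p.card ∧ p.card ≤ k) ∧
    (∀ p ∈ P, ∀ u ∈ p, ∀ v ∈ p, u ≠ v → T.theta u v = 0) ∧
    (∀ u v, u ∈ T.verts → v ∈ T.verts → u ≠ v → T.theta u v = 0 →
      ∀ p ∈ P, (u ∈ p ↔ v ∈ p))) ∧
  ∃ G ∈ C, T.IsRealization G

/-- `T` is the generalized `k`-join of `T1` and `T2`. -/
def IsGenJoin (k : ℕ) (T T1 T2 : FTG α) : Prop :=
  ∃ (r s : ℕ) (A : Fin r → Finset α) (B : Fin s → Finset α) (a : Fin r → α) (b : Fin s → α),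
    1 ≤ r ∧ r ≤ k ∧ 1 ≤ s ∧ s ≤ k ∧
    (∀ j, (A j).Nonempty) ∧ (∀ i, (B i).Nonempty) ∧
    (∀ j j', j ≠ j' → Disjoint (A j) (A j')) ∧
    (∀ i i', i ≠ i' → Disjoint (B i) (B i')) ∧
    Function.Injective a ∧ Function.Injective b ∧
    (∀ i j, b i ∉ A j) ∧ (∀ j i, a j ∉ B i) ∧
    Disjoint T1.verts T2.verts ∧
    T1.verts = Finset.univ.biUnion A ∪ Finset.univ.image b ∧
    T2.verts = Finset.univ.biUnion B ∪ Finset.univ.image a ∧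
    (∀ i i', i ≠ i' → T1.theta (b i) (b i') = 0) ∧
    (∀ j j', j ≠ j' → T2.theta (a j) (a j') = 0) ∧
    (∀ i j, ((∀ u ∈ A j, T1.theta (b i) u = 1) ∧ (∀ u ∈ B i, T2.theta (a j) u = 1)) ∨
            ((∀ u ∈ A j, T1.theta (b i) u = -1) ∧ (∀ u ∈ B i, T2.theta (a j) u = -1))) ∧
    T.verts = Finset.univ.biUnion A ∪ Finset.univ.biUnion B ∧
    (∀ u ∈ Finset.univ.biUnion A, ∀ v ∈ Finset.univ.biUnion A, T.theta u v = T1.theta u v) ∧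
    (∀ u ∈ Finset.univ.biUnion B, ∀ v ∈ Finset.univ.biUnion B, T.theta u v = T2.theta u v) ∧
    (∀ j i, ∀ u ∈ A j, ∀ v ∈ B i,
      ((∀ x ∈ A j, T1.theta (b i) x = 1) → T.theta u v = 1) ∧
      ((∀ x ∈ A j, T1.theta (b i) x = -1) → T.theta u v = -1))

/-- The closure of `𝒞^{≤k}` under generalized `k`-joins. -/
inductive InClosure (C : Set (FTG α)) (k : ℕ) : FTG α → Prop where
  | base (T : FTG α) (h : InCk C k T) : InClosure C k T
  | join (T T1 T2 : FTG α) (h1 : InClosure C k T1) (h2 : InClosure C k T2)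
      (h : IsGenJoin k T T1 T2) : InClosure C k T

/-- `𝒞` is closed under induced subgraphs. -/
def ClosedUnderInduced (C : Set (FTG α)) : Prop :=
  ∀ G ∈ C, ∀ s : Finset α, s ⊆ G.verts → FTG.mk s G.theta G.symm G.range ∈ C

/-- `𝒞` is `c`-good: every member with at least 2 vertices, with any `c`-balanced weight
function, has a biclique or a complement biclique of weight at least `c` times the total
weight. -/
def IsGood (c : ℝ) (C : Set (FTG α)) : Prop :=
  ∀ G ∈ C, 2 ≤ G.verts.card → ∀ w : α → ℕ,
    (∀ v ∈ G.verts, (w v : ℝ) ≤ c * ∑ x ∈ G.verts, (w x : ℝ)) →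
    ∃ V1 V2 : Finset α, V1 ⊆ G.verts ∧ V2 ⊆ G.verts ∧ Disjoint V1 V2 ∧
      ((∀ u ∈ V1, ∀ v ∈ V2, G.StrongAdj u v) ∨ (∀ u ∈ V1, ∀ v ∈ V2, G.StrongAntiAdj u v)) ∧
      c * (∑ x ∈ G.verts, (w x : ℝ)) ≤ min (∑ x ∈ V1, (w x : ℝ)) (∑ x ∈ V2, (w x : ℝ))

end FTG

/-!
Induct over the construction of `T`. A trigraph of `𝒞^{≤k}` is coloured with `k` colours,
injectively on every part, so that no monochromatic pair is switchable; on each colour class it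
agrees with its realization `G ∈ 𝒞`, and gluing one cut of a CS-separator of `G` per colour gives a
CS-separator of size at most `(p' n^c)^k`. For a generalized `k`-join, pulling back CS-separators
of `T1` and `T2` along the maps collapsing each `Bᵢ` to `bᵢ` (resp. each `Aⱼ` to `aⱼ`) separates
every clique–stable pair that splits no `Bᵢ` (resp. no `Aⱼ`), and as `Aⱼ` is complete or
anticomplete to `Bᵢ`, no pair splits both. Since `|T1| + |T2| = |T| + r + s ≤ |T| + 2k`, a bound
that is superadditive up to a shift by `2k` survives the induction, and it is `O(n^{k²c})`.
-/

open Finset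

namespace FTG

variable {α : Type}

theorem IsClique.subset {T : FTG α} {K K' : Set α} (hK : T.IsClique K) (h : K' ⊆ K) :
    T.IsClique K' :=
  ⟨h.trans hK.1, hK.2.mono h⟩

theorem IsStable.subset {T : FTG α} {S S' : Set α} (hS : T.IsStable S) (h : S' ⊆ S) :
    T.IsStable S' :=
  ⟨h.trans hS.1, hS.2.mono h⟩

def Splits (K S X : Set α) : Prop := (K ∩ X).Nonempty ∧ (S ∩ X).Nonempty

theorem not_splits_of_card_le_one {K S : Set α} {X : Finset α} (hKS : Disjoint K S)
    (hX : X.card ≤ 1) : ¬ Splits K S X := by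
  rintro ⟨⟨x, hxK, hxX⟩, ⟨y, hyS, hyX⟩⟩
  obtain rfl := card_le_one.mp hX x hxX y hyX
  exact Set.disjoint_left.mp hKS hxK hyS

theorem not_splits_and_splits {T : FTG α} {K S X Y : Set α} (hK : T.IsClique K)
    (hS : T.IsStable S)
    (hXY : (∀ x ∈ X, ∀ y ∈ Y, T.StrongAdj x y) ∨ (∀ x ∈ X, ∀ y ∈ Y, T.StrongAntiAdj x y)) :
    ¬ (Splits K S X ∧ Splits K S Y) := by
  rintro ⟨⟨⟨x, hxK, hxX⟩, ⟨x', hxS, hxX'⟩⟩, ⟨⟨y, hyK, hyY⟩, ⟨y', hyS, hyY'⟩⟩⟩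
  rcases hXY with hXY | hXY
  · obtain ⟨-, -, hne, h1⟩ := hXY x' hxX' y' hyY'
    have := (hS.2 hxS hyS hne).2.2.2
    omega
  · obtain ⟨-, -, hne, h1⟩ := hXY x hxX y hyY
    have := (hK.2 hxK hyK hne).2.2.2
    omega

/-- The CS-separators of `T` are its `IsCSSeparatorFor T Disjoint` families. -/
def IsCSSeparatorFor (T : FTG α) (R : Set α → Set α → Prop)
    (F : Finset (Set α × Set α)) : Prop :=
  (∀ c ∈ F, T.IsCut c) ∧
  ∀ K S : Set α, T.IsClique K → T.IsStable S → R K S → ∃ c ∈ F, K ⊆ c.1 ∧ S ⊆ c.2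

theorem IsCSSeparatorFor.mono {T : FTG α} {R R' : Set α → Set α → Prop}
    {F : Finset (Set α × Set α)} (hF : T.IsCSSeparatorFor R F)
    (h : ∀ K S, T.IsClique K → T.IsStable S → R' K S → R K S) : T.IsCSSeparatorFor R' F :=
  ⟨hF.1, fun K S hK hS hR => hF.2 K S hK hS (h K S hK hS hR)⟩

theorem IsCSSeparatorFor.exists_sup {T : FTG α} {R R' : Set α → Set α → Prop}
    {F F' : Finset (Set α × Set α)} (hF : T.IsCSSeparatorFor R F)
    (hF' : T.IsCSSeparatorFor R' F') :
    ∃ G, T.IsCSSeparatorFor (R ⊔ R') G ∧ G.card ≤ F.card + F'.card := by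
  classical
  refine ⟨F ∪ F', ⟨fun c hc => ?_, fun K S hK hS hR => ?_⟩, card_union_le F F'⟩
  · rcases mem_union.mp hc with hc | hc
    exacts [hF.1 c hc, hF'.1 c hc]
  · rcases hR with hR | hR
    · obtain ⟨c, hc, hKS⟩ := hF.2 K S hK hS hR
      exact ⟨c, mem_union_left _ hc, hKS⟩
    · obtain ⟨c, hc, hKS⟩ := hF'.2 K S hK hS hR
      exact ⟨c, mem_union_right _ hc, hKS⟩

theorem exists_isCSSeparator_card_le_two_pow (T : FTG α) :
    ∃ F, T.IsCSSeparator F ∧ F.card ≤ 2 ^ T.verts.card := by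
  classical
  refine ⟨T.verts.powerset.image fun s : Finset α => (↑s, ↑(T.verts \ s)),
    ⟨?_, fun K S hK hS hKS => ?_⟩, card_image_le.trans (card_powerset _).le⟩
  · simp only [mem_image, mem_powerset]
    rintro _ ⟨s, hs, rfl⟩
    refine ⟨Set.disjoint_left.mpr fun x hx hx' => ?_, ?_⟩
    · simp_all
    · rw [← coe_union, union_sdiff_of_subset hs]
  · refine ⟨_, mem_image_of_mem _ (mem_powerset.mpr (filter_subset (· ∈ K) T.verts)),
      fun x hx => ?_, fun x hx => ?_⟩
    · simpa [hx] using hK.1 hx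
    · simpa [Set.disjoint_right.mp hKS hx] using hS.1 hx

theorem IsRealization.theta_eq {T G : FTG α} (hG : T.IsRealization G) {u v : α}
    (hu : u ∈ T.verts) (hv : v ∈ T.verts) (huv : u ≠ v) (h0 : T.theta u v ≠ 0) :
    G.theta u v = T.theta u v := by
  rcases T.range u v with h | h | h
  · rw [(hG.2.2 u v hu hv huv).2 h, h]
  · exact absurd h h0
  · rw [(hG.2.2 u v hu hv huv).1 h, h]

theorem IsRealization.isClique {T G : FTG α} (hG : T.IsRealization G) {K : Set α}
    (hK : T.IsClique K) (h0 : K.Pairwise fun u v => T.theta u v ≠ 0) : G.IsClique K := by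
  refine ⟨hG.1 ▸ hK.1, fun u hu v hv huv => ?_⟩
  obtain ⟨hu', hv', -, hθ⟩ := hK.2 hu hv huv
  exact ⟨hG.1 ▸ hu', hG.1 ▸ hv', huv, hG.theta_eq hu' hv' huv (h0 hu hv huv) ▸ hθ⟩

theorem IsRealization.isStable {T G : FTG α} (hG : T.IsRealization G) {S : Set α}
    (hS : T.IsStable S) (h0 : S.Pairwise fun u v => T.theta u v ≠ 0) : G.IsStable S := by
  refine ⟨hG.1 ▸ hS.1, fun u hu v hv huv => ?_⟩
  obtain ⟨hu', hv', -, hθ⟩ := hS.2 hu hv huv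
  exact ⟨hG.1 ▸ hu', hG.1 ▸ hv', huv, hG.theta_eq hu' hv' huv (h0 hu hv huv) ▸ hθ⟩

theorem IsCSSeparator.exists_of_isRealization {T G : FTG α} {k : ℕ} (hG : T.IsRealization G)
    (f : α → Fin k)
    (hf : ∀ u ∈ T.verts, ∀ v ∈ T.verts, u ≠ v → f u = f v → T.theta u v ≠ 0)
    {F : Finset (Set α × Set α)} (hF : G.IsCSSeparator F) :
    ∃ F', T.IsCSSeparator F' ∧ F'.card ≤ F.card ^ k := by
  classical
  let glue : (Fin k → Set α × Set α) → Set α × Set α := fun g =>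
    ({x | x ∈ T.verts ∧ x ∈ (g (f x)).1}, {x | x ∈ T.verts ∧ x ∉ (g (f x)).1})
  refine ⟨(Fintype.piFinset fun _ => F).image glue, ⟨?_, fun K S hK hS hKS => ?_⟩,
    card_image_le.trans (by simp)⟩
  · simp only [mem_image]
    rintro _ ⟨g, -, rfl⟩
    refine ⟨Set.disjoint_left.mpr fun x hx hx' => hx'.2 hx.2, ?_⟩
    ext x
    by_cases x ∈ (g (f x)).1 <;> simp [glue, *]
  · have hslice : ∀ i, ∃ c ∈ F, {x | x ∈ K ∧ f x = i} ⊆ c.1 ∧ {x | x ∈ S ∧ f x = i} ⊆ c.2 := by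
      intro i
      refine hF.2 _ _ (hG.isClique (hK.subset fun x hx => hx.1) ?_)
        (hG.isStable (hS.subset fun x hx => hx.1) ?_)
        (hKS.mono (fun x hx => hx.1) (fun x hx => hx.1))
      · exact fun u hu v hv huv => hf u (hK.1 hu.1) v (hK.1 hv.1) huv (hu.2.trans hv.2.symm)
      · exact fun u hu v hv huv => hf u (hS.1 hu.1) v (hS.1 hv.1) huv (hu.2.trans hv.2.symm)
    choose g hgF hgK hgS using hslice
    refine ⟨glue g, mem_image_of_mem _ (Fintype.mem_piFinset.mpr hgF),
      fun x hx => ⟨hK.1 hx, hgK _ ⟨hx, rfl⟩⟩, fun x hx => ⟨hS.1 hx, fun h1 => ?_⟩⟩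
    exact Set.disjoint_left.mp (hF.1 _ (hgF _)).1 h1 (hgS _ ⟨hx, rfl⟩)

theorem exists_injOn_of_card_le {P : Finset (Finset α)} {k : ℕ} (hk : 0 < k)
    (hP : ∀ p ∈ P, ∀ q ∈ P, p ≠ q → Disjoint p q) (hPk : ∀ p ∈ P, p.card ≤ k) :
    ∃ f : α → Fin k, ∀ p ∈ P, Set.InjOn f p := by
  classical
  have hpart : ∀ x, ∃ p : Finset α, ∀ q ∈ P, x ∈ q → q = p := by
    intro x
    by_cases hx : ∃ p ∈ P, x ∈ p
    · obtain ⟨p, hp, hxp⟩ := hx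
      exact ⟨p, fun q hq hxq => by_contra fun hne => disjoint_left.mp (hP q hq p hp hne) hxq hxp⟩
    · exact ⟨∅, fun q hq hxq => absurd ⟨q, hq, hxq⟩ hx⟩
  choose part hpart using hpart
  -- `% k` only serves to land in `Fin k`: on the parts it is the identity
  have hidx : ∀ p ∈ P, ∀ x ∈ p, (part x).toList.idxOf x % k = p.toList.idxOf x := by
    intro p hp x hx
    rw [← hpart x p hp hx]
    refine Nat.mod_eq_of_lt (lt_of_lt_of_le ?_ (hPk p hp))
    rw [← length_toList]
    exact List.idxOf_lt_length_iff.mpr (mem_toList.mpr hx)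
  refine ⟨fun x => ⟨(part x).toList.idxOf x % k, Nat.mod_lt _ hk⟩, fun p hp x hx y hy hxy => ?_⟩
  have hxy' := Fin.val_eq_of_eq hxy
  simp only [hidx p hp x hx, hidx p hp y hy] at hxy'
  exact (List.idxOf_inj (mem_toList.mpr hx)).mp hxy'

/-- Since a switchable pair is both adjacent and antiadjacent, such a map sends cliques to
cliques and stable sets to stable sets. -/
structure IsSemiHom (T TX : FTG α) (π : α → α) : Prop where
  mapsTo : Set.MapsTo π T.verts TX.verts
  theta : ∀ u ∈ T.verts, ∀ v ∈ T.verts, π u ≠ π v →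
    TX.theta (π u) (π v) = T.theta u v ∨ TX.theta (π u) (π v) = 0

theorem IsClique.image {T TX : FTG α} {π : α → α} (hπ : T.IsSemiHom TX π) {K : Set α}
    (hK : T.IsClique K) : TX.IsClique (π '' K) := by
  refine ⟨Set.image_subset_iff.mpr fun u hu => hπ.mapsTo (hK.1 hu), ?_⟩
  rintro _ ⟨u, hu, rfl⟩ _ ⟨v, hv, rfl⟩ huv
  obtain ⟨hu', hv', -, hθ⟩ := hK.2 hu hv (ne_of_apply_ne π huv)
  refine ⟨hπ.mapsTo hu', hπ.mapsTo hv', huv, ?_⟩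
  rcases hπ.theta u hu' v hv' huv with h | h <;> rw [h]
  exact hθ

theorem IsStable.image {T TX : FTG α} {π : α → α} (hπ : T.IsSemiHom TX π) {S : Set α}
    (hS : T.IsStable S) : TX.IsStable (π '' S) := by
  refine ⟨Set.image_subset_iff.mpr fun u hu => hπ.mapsTo (hS.1 hu), ?_⟩
  rintro _ ⟨u, hu, rfl⟩ _ ⟨v, hv, rfl⟩ huv
  obtain ⟨hu', hv', -, hθ⟩ := hS.2 hu hv (ne_of_apply_ne π huv)
  refine ⟨hπ.mapsTo hu', hπ.mapsTo hv', huv, ?_⟩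
  rcases hπ.theta u hu' v hv' huv with h | h <;> rw [h]
  exact hθ

theorem IsCSSeparator.exists_comap {T TX : FTG α} {π : α → α} (hπ : T.IsSemiHom TX π)
    {F : Finset (Set α × Set α)} (hF : TX.IsCSSeparator F) :
    ∃ F', T.IsCSSeparatorFor (fun K S => Disjoint (π '' K) (π '' S)) F' ∧ F'.card ≤ F.card := by
  classical
  let pull : Set α × Set α → Set α × Set α := fun c =>
    (↑T.verts ∩ π ⁻¹' c.1, ↑T.verts ∩ π ⁻¹' c.2)
  refine ⟨F.image pull, ⟨?_, fun K S hK hS hKS => ?_⟩, card_image_le⟩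
  · simp only [mem_image]
    rintro _ ⟨c, hc, rfl⟩
    obtain ⟨hdisj, hunion⟩ := hF.1 c hc
    refine ⟨((hdisj.preimage π).mono Set.inter_subset_right Set.inter_subset_right), ?_⟩
    rw [← Set.inter_union_distrib_left, ← Set.preimage_union, hunion]
    exact Set.inter_eq_left.mpr hπ.mapsTo
  · obtain ⟨c, hc, hKc, hSc⟩ := hF.2 _ _ (hK.image hπ) (hS.image hπ) hKS
    exact ⟨pull c, mem_image_of_mem _ hc, fun u hu => ⟨hK.1 hu, hKc ⟨u, hu, rfl⟩⟩,
      fun v hv => ⟨hS.1 hv, hSc ⟨v, hv, rfl⟩⟩⟩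

section Blowup

variable {s : ℕ}

open Classical in
noncomputable def blockMap (B : Fin s → Finset α) (b : Fin s → α) (x : α) : α :=
  if h : ∃ i, x ∈ B i then b h.choose else x

theorem blockMap_of_mem {B : Fin s → Finset α} (b : Fin s → α)
    (hB : ∀ i j, i ≠ j → Disjoint (B i) (B j)) {x : α} {i : Fin s} (hx : x ∈ B i) :
    blockMap B b x = b i := by
  have h : ∃ i, x ∈ B i := ⟨i, hx⟩
  rw [blockMap, dif_pos h]
  by_contra hne
  exact disjoint_left.mp (hB _ _ fun hi => hne (congrArg b hi)) h.choose_spec hx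

theorem blockMap_of_forall_notMem {B : Fin s → Finset α} (b : Fin s → α) {x : α}
    (hx : ∀ i, x ∉ B i) : blockMap B b x = x := by
  rw [blockMap, dif_neg (not_exists.mpr hx)]

variable [DecidableEq α]

/-- `T` arises from `TX` by replacing each vertex `b i` by the block `B i`, whose vertices see
`U` as `b i` does. The markers `b i` are pairwise switchable in `TX`, so `TX` carries no
information on the pairs inside `univ.biUnion B`. -/
structure IsBlowup (T TX : FTG α) (U : Finset α) (B : Fin s → Finset α) (b : Fin s → α) :
    Prop where
  verts_eq : T.verts = U ∪ univ.biUnion B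
  verts_eq_marker : TX.verts = U ∪ univ.image b
  disjoint : Disjoint U (univ.biUnion B)
  block_nonempty : ∀ i, (B i).Nonempty
  block_disjoint : ∀ i j, i ≠ j → Disjoint (B i) (B j)
  marker_injective : Function.Injective b
  marker_notMem : ∀ i, b i ∉ U
  theta_marker : ∀ i j, i ≠ j → TX.theta (b i) (b j) = 0
  theta_eq : ∀ u ∈ U, ∀ v ∈ U, T.theta u v = TX.theta u v
  theta_block : ∀ i, ∀ u ∈ U, ∀ v ∈ B i, T.theta u v = TX.theta u (b i)

namespace IsBlowup

variable {T TX : FTG α} {U : Finset α} {B : Fin s → Finset α} {b : Fin s → α}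

theorem blockMap_cases (h : T.IsBlowup TX U B b) {x : α} (hx : x ∈ T.verts) :
    (x ∈ U ∧ blockMap B b x = x) ∨ ∃ i, x ∈ B i ∧ blockMap B b x = b i := by
  rw [h.verts_eq, mem_union, mem_biUnion] at hx
  rcases hx with hx | ⟨i, -, hx⟩
  · exact Or.inl ⟨hx, blockMap_of_forall_notMem b fun i hi =>
      disjoint_left.mp h.disjoint hx (mem_biUnion.mpr ⟨i, mem_univ _, hi⟩)⟩
  · exact Or.inr ⟨i, hx, blockMap_of_mem b h.block_disjoint hx⟩

theorem isSemiHom (h : T.IsBlowup TX U B b) : T.IsSemiHom TX (blockMap B b) where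
  mapsTo x hx := by
    rw [mem_coe, h.verts_eq_marker]
    rcases h.blockMap_cases hx with ⟨hxU, hπ⟩ | ⟨i, -, hπ⟩ <;> rw [hπ]
    · exact mem_union_left _ hxU
    · exact mem_union_right _ (mem_image_of_mem _ (mem_univ i))
  theta u hu v hv huv := by
    rcases h.blockMap_cases hu with ⟨hu', hπu⟩ | ⟨i, hu', hπu⟩ <;>
      rcases h.blockMap_cases hv with ⟨hv', hπv⟩ | ⟨j, hv', hπv⟩ <;> rw [hπu, hπv] at huv ⊢
    · exact Or.inl (h.theta_eq u hu' v hv').symm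
    · exact Or.inl (h.theta_block j u hu' v hv').symm
    · rw [TX.symm, T.symm]
      exact Or.inl (h.theta_block i v hv' u hu').symm
    · exact Or.inr (h.theta_marker i j fun hij => huv (congrArg b hij))

theorem disjoint_image_blockMap (h : T.IsBlowup TX U B b) {K S : Set α} (hK : K ⊆ T.verts)
    (hS : S ⊆ T.verts) (hKS : Disjoint K S) (hsplit : ∀ i, ¬ Splits K S (B i)) :
    Disjoint (blockMap B b '' K) (blockMap B b '' S) := by
  rw [Set.disjoint_left]
  rintro _ ⟨u, hu, rfl⟩ ⟨v, hv, hvu⟩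
  rcases h.blockMap_cases (hK hu) with ⟨hu', hπu⟩ | ⟨i, hu', hπu⟩ <;>
    rcases h.blockMap_cases (hS hv) with ⟨hv', hπv⟩ | ⟨j, hv', hπv⟩ <;> rw [hπu, hπv] at hvu
  · exact Set.disjoint_left.mp hKS hu (hvu ▸ hv)
  · exact h.marker_notMem j (hvu ▸ hu')
  · exact h.marker_notMem i (hvu ▸ hv')
  · obtain rfl := h.marker_injective hvu
    exact hsplit j ⟨⟨u, hu, hu'⟩, ⟨v, hv, hv'⟩⟩

theorem exists_isCSSeparatorFor (h : T.IsBlowup TX U B b) {F : Finset (Set α × Set α)}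
    (hF : TX.IsCSSeparator F) :
    ∃ F', T.IsCSSeparatorFor (fun K S => Disjoint K S ∧ ∀ i, ¬ Splits K S (B i)) F' ∧
      F'.card ≤ F.card := by
  obtain ⟨F', hF', hcard⟩ := hF.exists_comap h.isSemiHom
  exact ⟨F', hF'.mono fun K S hK hS hKS => h.disjoint_image_blockMap hK.1 hS.1 hKS.1 hKS.2,
    hcard⟩

theorem exists_isCSSeparator_of_card_le_one (h : T.IsBlowup TX U B b)
    (hB : ∀ i, (B i).card ≤ 1) {F : Finset (Set α × Set α)} (hF : TX.IsCSSeparator F) :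
    ∃ F', T.IsCSSeparator F' ∧ F'.card ≤ F.card := by
  obtain ⟨F', hF', hcard⟩ := h.exists_isCSSeparatorFor hF
  exact ⟨F', hF'.mono fun K S _ _ hKS => ⟨hKS, fun i => not_splits_of_card_le_one hKS (hB i)⟩,
    hcard⟩

theorem card_verts (h : T.IsBlowup TX U B b) :
    T.verts.card = U.card + (univ.biUnion B).card := by
  rw [h.verts_eq, card_union_of_disjoint h.disjoint]

theorem card_verts_marker (h : T.IsBlowup TX U B b) : TX.verts.card = U.card + s := by
  have hUb : Disjoint U (univ.image b) := disjoint_right.mpr fun x hx hxU => by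
    obtain ⟨i, -, rfl⟩ := mem_image.mp hx
    exact h.marker_notMem i hxU
  rw [h.verts_eq_marker, card_union_of_disjoint hUb, card_image_of_injective _ h.marker_injective,
    card_univ, Fintype.card_fin]

theorem card_biUnion_eq_sum (h : T.IsBlowup TX U B b) :
    (univ.biUnion B).card = ∑ i, (B i).card :=
  card_biUnion fun i _ j _ hij => h.block_disjoint i j hij

theorem le_card_biUnion (h : T.IsBlowup TX U B b) : s ≤ (univ.biUnion B).card := by
  calc s = ∑ _i : Fin s, 1 := by simp
    _ ≤ ∑ i, (B i).card := sum_le_sum fun i _ => (h.block_nonempty i).card_pos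
    _ = (univ.biUnion B).card := h.card_biUnion_eq_sum.symm

theorem lt_card_biUnion (h : T.IsBlowup TX U B b) {i : Fin s} (hi : 1 < (B i).card) :
    s < (univ.biUnion B).card := by
  calc s = ∑ _i : Fin s, 1 := by simp
    _ < ∑ i, (B i).card :=
      sum_lt_sum (fun i _ => (h.block_nonempty i).card_pos) ⟨i, mem_univ i, hi⟩
    _ = (univ.biUnion B).card := h.card_biUnion_eq_sum.symm

theorem card_verts_marker_eq (h : T.IsBlowup TX U B b) (hB : ∀ i, (B i).card ≤ 1) :
    TX.verts.card = T.verts.card := by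
  have : (univ.biUnion B).card ≤ s :=
    card_biUnion_le.trans (by simpa using sum_le_sum fun i (_ : i ∈ univ) => hB i)
  have := h.le_card_biUnion
  rw [h.card_verts, h.card_verts_marker]
  omega

end IsBlowup

end Blowup

section

variable [DecidableEq α]

theorem InCk.exists_lift {C : Set (FTG α)} {k : ℕ} {T : FTG α} (hk : 0 < k)
    (hT : InCk C k T) :
    ∃ G ∈ C, G.verts = T.verts ∧
      ∀ F, G.IsCSSeparator F → ∃ F', T.IsCSSeparator F' ∧ F'.card ≤ F.card ^ k := by
  obtain ⟨⟨P, hPV, hPdisj, hPcard, -, hPsw⟩, G, hGC, hTG⟩ := hT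
  obtain ⟨f, hf⟩ := exists_injOn_of_card_le hk hPdisj fun p hp => (hPcard p hp).2
  refine ⟨G, hGC, hTG.1, fun F hF => hF.exists_of_isRealization hTG f ?_⟩
  intro u hu v hv huv hfuv h0
  obtain ⟨p, hp, hup⟩ : ∃ p ∈ P, u ∈ p := by simpa [← hPV] using hu
  exact huv (hf p hp hup ((hPsw u v hu hv huv h0 p hp).mp hup) hfuv)

theorem IsGenJoin.exists_blowups {k : ℕ} {T T1 T2 : FTG α} (hJ : IsGenJoin k T T1 T2) :
    ∃ (r s : ℕ) (A : Fin r → Finset α) (B : Fin s → Finset α) (a : Fin r → α) (b : Fin s → α),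
      r ≤ k ∧ s ≤ k ∧ T.IsBlowup T1 (univ.biUnion A) B b ∧
      T.IsBlowup T2 (univ.biUnion B) A a ∧
      ∀ j i, (∀ u ∈ A j, ∀ v ∈ B i, T.StrongAdj u v) ∨
        (∀ u ∈ A j, ∀ v ∈ B i, T.StrongAntiAdj u v) := by
  obtain ⟨r, s, A, B, a, b, -, hrk, -, hsk, hAne, hBne, hAdisj, hBdisj, ha, hb, hbA, haB,
    h12, hV1, hV2, hbb, haa, hdich, hV, hθA, hθB, hcross⟩ := hJ
  have hAB : Disjoint (univ.biUnion A) (univ.biUnion B) :=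
    h12.mono (hV1 ▸ subset_union_left) (hV2 ▸ subset_union_left)
  have hθ : ∀ j i, ∀ u ∈ A j, ∀ v ∈ B i,
      T.theta u v = T1.theta u (b i) ∧ T.theta v u = T2.theta v (a j) := by
    intro j i u hu v hv
    rcases hdich i j with ⟨h1, h2⟩ | ⟨h1, h2⟩
    · rw [T.symm v u, (hcross j i u hu v hv).1 h1, T1.symm u, h1 u hu, T2.symm v, h2 v hv]
      exact ⟨rfl, rfl⟩
    · rw [T.symm v u, (hcross j i u hu v hv).2 h1, T1.symm u, h1 u hu, T2.symm v, h2 v hv]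
      exact ⟨rfl, rfl⟩
  have hAT : ∀ j, ∀ u ∈ A j, u ∈ T.verts := fun j u hu =>
    hV ▸ mem_union_left _ (mem_biUnion.mpr ⟨j, mem_univ j, hu⟩)
  have hBT : ∀ i, ∀ v ∈ B i, v ∈ T.verts := fun i v hv =>
    hV ▸ mem_union_right _ (mem_biUnion.mpr ⟨i, mem_univ i, hv⟩)
  have hne : ∀ j i, ∀ u ∈ A j, ∀ v ∈ B i, u ≠ v := fun j i u hu v hv huv =>
    disjoint_left.mp hAB (mem_biUnion.mpr ⟨j, mem_univ j, hu⟩)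
      (mem_biUnion.mpr ⟨i, mem_univ i, huv ▸ hv⟩)
  refine ⟨r, s, A, B, a, b, hrk, hsk, ⟨hV, hV1, hAB, hBne, hBdisj, hb, fun i hi => ?_, hbb, hθA,
    fun i u hu v hv => ?_⟩, ⟨by rw [hV, union_comm], hV2, hAB.symm, hAne, hAdisj, ha,
    fun j hj => ?_, haa, hθB, fun j v hv u hu => ?_⟩, fun j i => ?_⟩
  · obtain ⟨j, -, hj⟩ := mem_biUnion.mp hi
    exact hbA i j hj
  · obtain ⟨j, -, hj⟩ := mem_biUnion.mp hu
    exact (hθ j i u hj v hv).1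
  · obtain ⟨i, -, hi⟩ := mem_biUnion.mp hj
    exact haB j i hi
  · obtain ⟨i, -, hi⟩ := mem_biUnion.mp hv
    exact (hθ j i u hu v hi).2
  · rcases hdich i j with ⟨h1, -⟩ | ⟨h1, -⟩
    · exact Or.inl fun u hu v hv =>
        ⟨hAT j u hu, hBT i v hv, hne j i u hu v hv, (hcross j i u hu v hv).1 h1⟩
    · exact Or.inr fun u hu v hv =>
        ⟨hAT j u hu, hBT i v hv, hne j i u hu v hv, (hcross j i u hu v hv).2 h1⟩

/-- If all blocks on one side are singletons, that side is as large as `T` and alone gives a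
CS-separator; otherwise both sides are smaller than `T`. -/
theorem IsGenJoin.exists_isCSSeparator_card_le {k : ℕ} {T T1 T2 : FTG α} (g : ℕ → ℝ)
    (hg : ∀ n n1 n2, n1 < n → n2 < n → n1 + n2 ≤ n + 2 * k → g n1 + g n2 ≤ g n)
    (hJ : IsGenJoin k T T1 T2)
    (h1 : ∃ F, T1.IsCSSeparator F ∧ (F.card : ℝ) ≤ g T1.verts.card)
    (h2 : ∃ F, T2.IsCSSeparator F ∧ (F.card : ℝ) ≤ g T2.verts.card) :
    ∃ F, T.IsCSSeparator F ∧ (F.card : ℝ) ≤ g T.verts.card := by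
  obtain ⟨r, s, A, B, a, b, hrk, hsk, hB, hA, hAB⟩ := hJ.exists_blowups
  obtain ⟨F1, hF1, hF1g⟩ := h1
  obtain ⟨F2, hF2, hF2g⟩ := h2
  by_cases hBsmall : ∀ i, (B i).card ≤ 1
  · obtain ⟨F, hF, hFF1⟩ := hB.exists_isCSSeparator_of_card_le_one hBsmall hF1
    exact ⟨F, hF, hB.card_verts_marker_eq hBsmall ▸ (Nat.cast_le.mpr hFF1).trans hF1g⟩
  by_cases hAsmall : ∀ j, (A j).card ≤ 1
  · obtain ⟨F, hF, hFF2⟩ := hA.exists_isCSSeparator_of_card_le_one hAsmall hF2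
    exact ⟨F, hF, hA.card_verts_marker_eq hAsmall ▸ (Nat.cast_le.mpr hFF2).trans hF2g⟩
  push Not at hBsmall hAsmall
  obtain ⟨i, hi⟩ := hBsmall
  obtain ⟨j, hj⟩ := hAsmall
  obtain ⟨G1, hG1, hG1F1⟩ := hB.exists_isCSSeparatorFor hF1
  obtain ⟨G2, hG2, hG2F2⟩ := hA.exists_isCSSeparatorFor hF2
  obtain ⟨F, hF, hFG⟩ := hG1.exists_sup hG2
  refine ⟨F, hF.mono fun K S hK hS hKS => ?_, ?_⟩
  · by_cases hsplit : ∃ i, Splits K S (B i)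
    · obtain ⟨i, hi⟩ := hsplit
      exact Or.inr ⟨hKS, fun j hj => not_splits_and_splits hK hS (hAB j i) ⟨hj, hi⟩⟩
    · exact Or.inl ⟨hKS, not_exists.mp hsplit⟩
  · have := hB.card_verts
    have := hB.card_verts_marker
    have := hA.card_verts_marker
    have := hB.lt_card_biUnion hi
    have := hA.lt_card_biUnion hj
    calc (F.card : ℝ) ≤ F1.card + F2.card := by exact_mod_cast hFG.trans (add_le_add hG1F1 hG2F2)
      _ ≤ g T1.verts.card + g T2.verts.card := add_le_add hF1g hF2g
      _ ≤ g T.verts.card := hg _ _ _ (by omega) (by omega) (by omega)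

theorem InClosure.exists_isCSSeparator_card_le {C : Set (FTG α)} {k : ℕ} (g : ℕ → ℝ)
    (hbase : ∀ T, InCk C k T → ∃ F, T.IsCSSeparator F ∧ (F.card : ℝ) ≤ g T.verts.card)
    (hg : ∀ n n1 n2, n1 < n → n2 < n → n1 + n2 ≤ n + 2 * k → g n1 + g n2 ≤ g n)
    {T : FTG α} (hT : InClosure C k T) :
    ∃ F, T.IsCSSeparator F ∧ (F.card : ℝ) ≤ g T.verts.card := by
  induction hT with
  | base T hT => exact hbase T hT
  | join T T1 T2 _ _ hJ ih1 ih2 => exact hJ.exists_isCSSeparator_card_le g hg ih1 ih2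

end

end FTG

/-- A join of `T1` and `T2` into `T` only gives `|T1| + |T2| ≤ |T| + 2k`, so the bound is
superadditive up to a shift by `2k`; below the shift it doubles with each vertex. -/
noncomputable def sepBound (k : ℕ) (e q : ℝ) (n : ℕ) : ℝ :=
  if n ≤ 2 * k then 2 ^ n else q * ((n - 2 * k : ℕ) : ℝ) ^ e

theorem sepBound_of_le {k n : ℕ} {e q : ℝ} (hn : n ≤ 2 * k) : sepBound k e q n = 2 ^ n :=
  if_pos hn

theorem sepBound_of_lt {k n : ℕ} {e q : ℝ} (hn : 2 * k < n) :
    sepBound k e q n = q * ((n - 2 * k : ℕ) : ℝ) ^ e :=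
  if_neg hn.not_ge

theorem two_pow_le_four_pow {n k : ℕ} (hn : n ≤ 2 * k) : (2 : ℝ) ^ n ≤ 4 ^ k :=
  calc (2 : ℝ) ^ n ≤ 2 ^ (2 * k) := pow_le_pow_right₀ (by norm_num) hn
    _ = 4 ^ k := by rw [pow_mul]; norm_num

theorem sepBound_le_max {k n : ℕ} {e q : ℝ} (hq : 4 ^ k ≤ q) :
    sepBound k e q n ≤ q * ((max 1 (n - 2 * k) : ℕ) : ℝ) ^ e := by
  rcases le_or_gt n (2 * k) with hn | hn
  · rw [sepBound_of_le hn, Nat.sub_eq_zero_of_le hn]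
    simpa using (two_pow_le_four_pow hn).trans hq
  · rw [sepBound_of_lt hn, max_eq_right (by omega)]

theorem sepBound_add_le {k n n1 n2 : ℕ} {e q : ℝ} (he : 1 ≤ e) (hq : 2 * 4 ^ k ≤ q)
    (h1 : n1 < n) (h2 : n2 < n) (h : n1 + n2 ≤ n + 2 * k) :
    sepBound k e q n1 + sepBound k e q n2 ≤ sepBound k e q n := by
  have hq4 : (4 : ℝ) ^ k ≤ q := by linarith [pow_pos (by norm_num : (0 : ℝ) < 4) k]
  have hq0 : 0 ≤ q := (pow_nonneg (by norm_num) k).trans hq4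
  rcases le_or_gt n (2 * k) with hn | hn
  · rw [sepBound_of_le hn, sepBound_of_le (by omega), sepBound_of_le (by omega)]
    calc (2 : ℝ) ^ n1 + 2 ^ n2 ≤ 2 ^ (n - 1) + 2 ^ (n - 1) :=
          add_le_add (pow_le_pow_right₀ (by norm_num) (by omega))
            (pow_le_pow_right₀ (by norm_num) (by omega))
      _ = 2 ^ n := by rw [← two_mul, ← pow_succ']; congr 1; omega
  rw [sepBound_of_lt hn]
  have hm : (1 : ℝ) ≤ ((n - 2 * k : ℕ) : ℝ) ^ e :=
    Real.one_le_rpow (by exact_mod_cast (by omega : 1 ≤ n - 2 * k)) (by linarith)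
  by_cases hsmall : n1 ≤ 2 * k ∧ n2 ≤ 2 * k
  · rw [sepBound_of_le hsmall.1, sepBound_of_le hsmall.2]
    calc (2 : ℝ) ^ n1 + 2 ^ n2 ≤ 2 * 4 ^ k := by
          linarith [two_pow_le_four_pow hsmall.1, two_pow_le_four_pow hsmall.2]
      _ ≤ q * ((n - 2 * k : ℕ) : ℝ) ^ e := hq.trans (le_mul_of_one_le_right hq0 hm)
  -- a small side costs at most `q = q * 1 ^ e`, which superadditivity of `x ^ e` absorbs
  calc sepBound k e q n1 + sepBound k e q n2
      ≤ q * ((max 1 (n1 - 2 * k) : ℕ) : ℝ) ^ e + q * ((max 1 (n2 - 2 * k) : ℕ) : ℝ) ^ e :=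
        add_le_add (sepBound_le_max hq4) (sepBound_le_max hq4)
    _ ≤ q * (((max 1 (n1 - 2 * k) : ℕ) : ℝ) + ((max 1 (n2 - 2 * k) : ℕ) : ℝ)) ^ e := by
        rw [← mul_add]
        exact mul_le_mul_of_nonneg_left
          (Real.add_rpow_le_rpow_add (by positivity) (by positivity) he) hq0
    _ ≤ q * ((n - 2 * k : ℕ) : ℝ) ^ e := by
        refine mul_le_mul_of_nonneg_left (Real.rpow_le_rpow (by positivity) ?_ (by linarith)) hq0
        exact_mod_cast (by omega : max 1 (n1 - 2 * k) + max 1 (n2 - 2 * k) ≤ n - 2 * k)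

theorem sepBound_le_rpow {k n : ℕ} {e q : ℝ} (he : 0 ≤ e) (hq : 4 ^ k ≤ q) (hn : 1 ≤ n) :
    sepBound k e q n ≤ q * (n : ℝ) ^ e :=
  (sepBound_le_max hq).trans <| mul_le_mul_of_nonneg_left
    (Real.rpow_le_rpow (by positivity) (by exact_mod_cast (by omega : max 1 (n - 2 * k) ≤ n)) he)
    ((pow_nonneg (by norm_num) k).trans hq)

theorem pow_le_sepBound {k n : ℕ} {c e p' q x : ℝ} (hc : 0 ≤ c) (hce : c * k ≤ e)
    (hp' : 0 ≤ p') (hq : p' ^ k * ((2 * k + 1 : ℕ) : ℝ) ^ (c * k) ≤ q) (hn : 2 * k < n)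
    (hx : 0 ≤ x) (hxn : x ≤ p' * (n : ℝ) ^ c) : x ^ k ≤ sepBound k e q n := by
  rw [sepBound_of_lt hn]
  have hm : (1 : ℝ) ≤ ((n - 2 * k : ℕ) : ℝ) := by exact_mod_cast (by omega : 1 ≤ n - 2 * k)
  have hnm : (n : ℝ) ≤ ((2 * k + 1 : ℕ) : ℝ) * ((n - 2 * k : ℕ) : ℝ) := by
    have : n ≤ (2 * k + 1) * (n - 2 * k) := by
      nlinarith [Nat.sub_add_cancel hn.le, (by omega : 1 ≤ n - 2 * k)]
    exact_mod_cast this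
  calc x ^ k ≤ (p' * (n : ℝ) ^ c) ^ k := pow_le_pow_left₀ hx hxn k
    _ = p' ^ k * (n : ℝ) ^ (c * k) := by rw [mul_pow, Real.rpow_mul_natCast (Nat.cast_nonneg _)]
    _ ≤ p' ^ k * (((2 * k + 1 : ℕ) : ℝ) * ((n - 2 * k : ℕ) : ℝ)) ^ (c * k) := by gcongr
    _ = p' ^ k * ((2 * k + 1 : ℕ) : ℝ) ^ (c * k) * ((n - 2 * k : ℕ) : ℝ) ^ (c * k) := by
        rw [Real.mul_rpow (by positivity) (by positivity), mul_assoc]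
    _ ≤ q * ((n - 2 * k : ℕ) : ℝ) ^ e :=
        mul_le_mul hq (Real.rpow_le_rpow_of_exponent_le hm hce) (by positivity)
          ((by positivity : (0 : ℝ) ≤ p' ^ k * _).trans hq)

theorem FTG.InCk.exists_isCSSeparator_card_le_sepBound {α : Type} [DecidableEq α]
    {C : Set (FTG α)} {k : ℕ} {c e p' q : ℝ} (hk : 0 < k) (hc : 0 ≤ c) (hce : c * k ≤ e)
    (hp' : 0 ≤ p') (hq : p' ^ k * ((2 * k + 1 : ℕ) : ℝ) ^ (c * k) ≤ q)
    (hC : ∀ G ∈ C, G.verts.Nonempty →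
      ∃ F, G.IsCSSeparator F ∧ (F.card : ℝ) ≤ p' * (G.verts.card : ℝ) ^ c)
    {T : FTG α} (hT : InCk C k T) :
    ∃ F, T.IsCSSeparator F ∧ (F.card : ℝ) ≤ sepBound k e q T.verts.card := by
  rcases le_or_gt T.verts.card (2 * k) with hn | hn
  · obtain ⟨F, hF, hcard⟩ := T.exists_isCSSeparator_card_le_two_pow
    exact ⟨F, hF, by rw [sepBound_of_le hn]; exact_mod_cast hcard⟩
  obtain ⟨G, hGC, hGT, hlift⟩ := hT.exists_lift hk
  obtain ⟨FG, hFG, hFGcard⟩ := hC G hGC (hGT ▸ card_pos.mp (by omega))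
  obtain ⟨F, hF, hcard⟩ := hlift FG hFG
  refine ⟨F, hF, (Nat.cast_le.mpr hcard).trans ?_⟩
  push_cast
  exact pow_le_sepBound hc hce hp' hq hn (by positivity) (hGT ▸ hFGcard)

theorem stmt_15_general {α : Type} [DecidableEq α] (C : Set (FTG α))
    (k : ℕ) (hk : 1 ≤ k) (c : ℝ) (hc : 1 ≤ c)
    (h : ∃ p' : ℝ, 0 < p' ∧ ∀ G ∈ C, G.verts.Nonempty →
      ∃ F, FTG.IsCSSeparator G F ∧ (F.card : ℝ) ≤ p' * (G.verts.card : ℝ) ^ c) :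
    ∃ p : ℝ, 0 < p ∧ ∀ T : FTG α, FTG.InClosure C k T → T.verts.Nonempty →
      ∃ F, FTG.IsCSSeparator T F ∧
        (F.card : ℝ) ≤ p * (T.verts.card : ℝ) ^ ((k : ℝ) ^ 2 * c) := by
  obtain ⟨p', hp', hC⟩ := h
  set q : ℝ := max (2 * 4 ^ k) (p' ^ k * ((2 * k + 1 : ℕ) : ℝ) ^ (c * k))
  have hk' : (1 : ℝ) ≤ k := by exact_mod_cast hk
  have hce : c * k ≤ (k : ℝ) ^ 2 * c := by
    nlinarith [mul_le_mul_of_nonneg_left hk' (by positivity : (0 : ℝ) ≤ c * k)]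
  have hq : 2 * 4 ^ k ≤ q := le_max_left _ _
  have hq4 : 4 ^ k ≤ q := by linarith [pow_pos (by norm_num : (0 : ℝ) < 4) k]
  refine ⟨q, lt_of_lt_of_le (by positivity) hq, fun T hT hne => ?_⟩
  obtain ⟨F, hF, hcard⟩ := hT.exists_isCSSeparator_card_le _
    (fun T' hT' => hT'.exists_isCSSeparator_card_le_sepBound hk (by linarith) hce hp'.le
      (le_max_right _ _) hC)
    fun _ _ _ => sepBound_add_le (by nlinarith) hq
  exact ⟨F, hF, hcard.trans (sepBound_le_rpow (by positivity) hq4 (card_pos.mpr hne))⟩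

/-- If every graph of 𝒞 with at least one vertex admits a CS-separator of
size at most p'·|V(G)|^c, then there is p > 0 such that every trigraph of the closure of
𝒞^{≤k} under generalized k-joins, with at least one vertex, admits a CS-separator of size
at most p·|V(T)|^(k²c). -/
theorem stmt_15 {α : Type} [DecidableEq α] (C : Set (FTG α))
    (hgraph : ∀ G ∈ C, FTG.IsGraph G) (k : ℕ) (hk : 1 ≤ k) (c : ℝ) (hc : 1 ≤ c)
    (h : ∃ p' : ℝ, 0 < p' ∧ ∀ G ∈ C, G.verts.Nonempty →
      ∃ F, FTG.IsCSSeparator G F ∧ (F.card : ℝ) ≤ p' * (G.verts.card : ℝ) ^ c) :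
    ∃ p : ℝ, 0 < p ∧ ∀ T : FTG α, FTG.InClosure C k T → T.verts.Nonempty →
      ∃ F, FTG.IsCSSeparator T F ∧
        (F.card : ℝ) ≤ p * (T.verts.card : ℝ) ^ ((k : ℝ) ^ 2 * c) :=
  stmt_15_general C k hk c hc h
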